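/- arXiv:1612.08366 — 4 statements merged into one kernel-verified Lean document; each statement's English description precedes it below -/
import Mathlib

section
/- Fix x, y ∈ ℝ^d with x ≠ y, and let g(t) := −d·t + (|x|²+|y|²)/√(1+t²) − 2⟨x,y⟩ for t > 0. If g(t_m) = 0 for some t_m > 0 with d·t_m + 2⟨x,y⟩ > 0, then g(t₀) > 0 for every 0 < t₀ < t_m. Consequently the function t ↦ k_t(x,y) has at most one interior maximum. -/
open scoped RealInnerProductSpace

/-- If g(t_m) = 0 for some t_m > 0 with d·t_m + 2⟨x,y⟩ > 0, where
g(t) = −d·t + (|x|²+|y|²)/√(1+t²) − 2⟨x,y⟩, then g(t₀) > 0 for every 0 < t₀ < t_m. -/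
theorem stmt6 (d : ℕ) (x y : EuclideanSpace ℝ (Fin d)) (hxy : x ≠ y) (tm : ℝ) (htm : 0 < tm)
    (hg : -(d : ℝ) * tm + (‖x‖ ^ 2 + ‖y‖ ^ 2) / Real.sqrt (1 + tm ^ 2) - 2 * ⟪x, y⟫ = 0)
    (hpos : 0 < (d : ℝ) * tm + 2 * ⟪x, y⟫) :
    ∀ t₀ : ℝ, 0 < t₀ → t₀ < tm →
      0 < -(d : ℝ) * t₀ + (‖x‖ ^ 2 + ‖y‖ ^ 2) / Real.sqrt (1 + t₀ ^ 2) - 2 * ⟪x, y⟫ := by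
  intro t₀ ht₀ htlt
  set S : ℝ := ‖x‖ ^ 2 + ‖y‖ ^ 2 with hS
  set c : ℝ := ⟪x, y⟫ with hc
  have h1 : (0:ℝ) < Real.sqrt (1 + tm ^ 2) := Real.sqrt_pos.2 (by positivity)
  have h0 : (0:ℝ) < Real.sqrt (1 + t₀ ^ 2) := Real.sqrt_pos.2 (by positivity)
  have heq : S / Real.sqrt (1 + tm ^ 2) = (d : ℝ) * tm + 2 * c := by linarith
  have hdivpos : 0 < S / Real.sqrt (1 + tm ^ 2) := heq ▸ hpos
  have hSpos : 0 < S := by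
    by_contra h
    push_neg at h
    have : S / Real.sqrt (1 + tm ^ 2) ≤ 0 := div_nonpos_of_nonpos_of_nonneg h (le_of_lt h1)
    linarith
  have hsqrtlt : Real.sqrt (1 + t₀ ^ 2) < Real.sqrt (1 + tm ^ 2) := by
    apply Real.sqrt_lt_sqrt (by positivity)
    nlinarith
  have hdivlt : S / Real.sqrt (1 + tm ^ 2) < S / Real.sqrt (1 + t₀ ^ 2) :=
    div_lt_div_of_pos_left hSpos h0 hsqrtlt
  have hd : (0:ℝ) ≤ (d : ℝ) := Nat.cast_nonneg d
  nlinarith [mul_nonneg hd (le_of_lt (sub_pos.2 htlt))]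
end

section
/- Let x, y ∈ ℝ^d satisfy |y| > 3|x| and |x| ≥ 1. Then for every t with 0 < t < |y|/(9d|x|), one has (d·t + 2⟨x,y⟩)·√(1+t²) < |x|² + |y|². Hence the map t ↦ k_t(x,y) is strictly increasing on (0, |y|/(9d|x|)). -/
/-!
Since `k_t = exp (log k_t)` for `t > 0` and `d/dt log k_t = (S / √(1 + t²) - (d t + 2⟨x, y⟩)) / (2 t²)`
with `S = |x|² + |y|²`, the kernel increases on any interval where `(d t + 2⟨x, y⟩) √(1 + t²) < S`.
For `t < |y| / (9 d |x|)` this inequality follows from `√(1 + t²) ≤ 1 + t`, `⟨x, y⟩ ≤ |x| |y| < |y|² / 3`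
and `d t < |y| / 9`: the left side is then below `|y| / 9 + 73 |y|² / 81`, which is less than `|y|²`
because `|y| > 3`.
-/

open scoped RealInnerProductSpace

noncomputable def kker (d : ℕ) (x y : EuclideanSpace ℝ (Fin d)) (t : ℝ) : ℝ :=
  (2 * Real.pi * t) ^ (-(d : ℝ) / 2) * Real.exp (-‖x - y‖ ^ 2 / (2 * t)) *
    Real.exp (-((Real.sqrt (1 + t ^ 2) - 1) / (2 * t)) * (‖x‖ ^ 2 + ‖y‖ ^ 2))

open Real Set

-- `log k_t(x, y)` for `t > 0`, with `Q = ‖x - y‖²` and `S = ‖x‖² + ‖y‖²`.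
noncomputable def logKker (d Q S t : ℝ) : ℝ :=
  -(d / 2) * log (2 * π * t) - Q / (2 * t) - S * (√(1 + t ^ 2) - 1) / (2 * t)

lemma kker_eq_exp_logKker (d : ℕ) (x y : EuclideanSpace ℝ (Fin d)) {t : ℝ} (ht : 0 < t) :
    kker d x y t = exp (logKker d (‖x - y‖ ^ 2) (‖x‖ ^ 2 + ‖y‖ ^ 2) t) := by
  rw [kker, rpow_def_of_pos (by positivity), ← exp_add, ← exp_add, logKker]
  ring_nf

lemma hasDerivAt_logKker (d Q S : ℝ) {t : ℝ} (ht : 0 < t) :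
    HasDerivAt (logKker d Q S) ((Q - d * t - S + S / √(1 + t ^ 2)) / (2 * t ^ 2)) t := by
  have hpos : 0 < 1 + t ^ 2 := by positivity
  have h2t : HasDerivAt (fun t : ℝ => 2 * t) 2 t := by
    simpa using (hasDerivAt_id t).const_mul 2
  have hlog : HasDerivAt (fun t => log (2 * π * t)) (1 / t) t := by
    have h2πt : HasDerivAt (fun t : ℝ => 2 * π * t) (2 * π) t := by
      simpa using (hasDerivAt_id t).const_mul (2 * π)
    convert h2πt.log (by positivity) using 1
    field_simp
  have hsqrt : HasDerivAt (fun t => √(1 + t ^ 2)) (t / √(1 + t ^ 2)) t := by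
    convert ((hasDerivAt_pow 2 t).const_add 1).sqrt hpos.ne' using 1
    field_simp; ring
  have hs : √(1 + t ^ 2) ^ 2 = 1 + t ^ 2 := sq_sqrt hpos.le
  refine (((hlog.const_mul (-(d / 2))).sub ((hasDerivAt_const t Q).div h2t (by positivity))).sub
    (((hsqrt.sub_const 1).const_mul S).div h2t (by positivity))).congr_deriv ?_
  field_simp
  linear_combination S * hs

lemma kker_strictMonoOn (d : ℕ) (x y : EuclideanSpace ℝ (Fin d)) {s : Set ℝ}
    (hs : Convex ℝ s) (hs0 : s ⊆ Ioi 0)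
    (h : ∀ t ∈ interior s, (d * t + 2 * ⟪x, y⟫) * √(1 + t ^ 2) < ‖x‖ ^ 2 + ‖y‖ ^ 2) :
    StrictMonoOn (kker d x y) s := by
  have hlog : StrictMonoOn (logKker d (‖x - y‖ ^ 2) (‖x‖ ^ 2 + ‖y‖ ^ 2)) s := by
    refine strictMonoOn_of_deriv_pos hs
      (fun t ht => (hasDerivAt_logKker _ _ _ (hs0 ht)).continuousAt.continuousWithinAt)
      fun t ht => ?_
    have ht0 : 0 < t := hs0 (interior_subset ht)
    rw [(hasDerivAt_logKker _ _ _ ht0).deriv, norm_sub_sq_real]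
    have := (lt_div_iff₀ (by positivity : 0 < √(1 + t ^ 2))).2 (h t ht)
    exact div_pos (by linarith) (by positivity)
  intro a ha b hb hab
  rw [kker_eq_exp_logKker d x y (hs0 ha), kker_eq_exp_logKker d x y (hs0 hb)]
  exact exp_lt_exp.2 (hlog ha hb hab)

lemma mul_sqrt_one_add_sq_lt {d a b I t : ℝ} (hd : 1 ≤ d) (ha : 1 ≤ a) (hab : 3 * a < b)
    (hI : I ≤ a * b) (ht : 0 < t) (htb : t * (9 * d * a) < b) :
    (d * t + 2 * I) * √(1 + t ^ 2) < a ^ 2 + b ^ 2 := by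
  have hsqrt : √(1 + t ^ 2) ≤ 1 + t := sqrt_le_iff.2 ⟨by linarith, by nlinarith⟩
  have hdt : d * t < b / 9 := by nlinarith
  have ht9 : t < b / 9 := by nlinarith
  have hdt2 : d * t * t < b / 9 * (b / 9) := by nlinarith
  have hat : 9 * (a * t) < b := by nlinarith
  rcases le_or_gt (d * t + 2 * I) 0 with hneg | hpos
  · nlinarith [sqrt_nonneg (1 + t ^ 2)]
  · calc (d * t + 2 * I) * √(1 + t ^ 2) ≤ (d * t + 2 * (a * b)) * (1 + t) := by
          gcongr; linarith
      _ < a ^ 2 + b ^ 2 := by nlinarith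

/-- If |y| > 3|x| and |x| ≥ 1, then for 0 < t < |y|/(9d|x|) one has
(d·t + 2⟨x,y⟩)√(1+t²) < |x|² + |y|²; hence t ↦ k_t(x,y) is strictly increasing there. -/
theorem stmt7 (d : ℕ) (x y : EuclideanSpace ℝ (Fin d))
    (h1 : 3 * ‖x‖ < ‖y‖) (h2 : 1 ≤ ‖x‖) :
    (∀ t : ℝ, 0 < t → t < ‖y‖ / (9 * d * ‖x‖) →
      ((d : ℝ) * t + 2 * ⟪x, y⟫) * Real.sqrt (1 + t ^ 2) < ‖x‖ ^ 2 + ‖y‖ ^ 2) ∧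
    StrictMonoOn (kker d x y) (Set.Ioo 0 (‖y‖ / (9 * d * ‖x‖))) := by
  have hd : (1 : ℝ) ≤ d := by
    have : NeZero d := ⟨by rintro rfl; simp [Subsingleton.elim x 0] at h2; linarith⟩
    exact_mod_cast NeZero.one_le
  have key (t : ℝ) (ht : 0 < t) (htc : t < ‖y‖ / (9 * d * ‖x‖)) :
      ((d : ℝ) * t + 2 * ⟪x, y⟫) * √(1 + t ^ 2) < ‖x‖ ^ 2 + ‖y‖ ^ 2 :=
    mul_sqrt_one_add_sq_lt hd h2 h1 (real_inner_le_norm x y) ht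
      ((lt_div_iff₀ (by positivity)).1 htc)
  refine ⟨key, kker_strictMonoOn d x y (convex_Ioo _ _) Ioo_subset_Ioi_self fun t ht => ?_⟩
  rw [interior_Ioo] at ht
  exact key t ht.1 ht.2
end

section
/- Let x, y ∈ ℝ^d satisfy |x| ≤ √d and |y| ≥ 2^{16} d⁴. Then for every t with 0 < t < |y|/(9d), one has (d·t + 2⟨x,y⟩)·√(1+t²) < |x|² + |y|². -/
set_option maxHeartbeats 1000000


open scoped RealInnerProductSpace

/-- If |x| ≤ √d and |y| ≥ 2^16 d⁴, then for 0 < t < |y|/(9d),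
(d·t + 2⟨x,y⟩)√(1+t²) < |x|² + |y|². -/
theorem stmt8 (d : ℕ) (hd : 1 ≤ d) (x y : EuclideanSpace ℝ (Fin d))
    (hx : ‖x‖ ≤ Real.sqrt d) (hy : 2 ^ 16 * (d : ℝ) ^ 4 ≤ ‖y‖) :
    ∀ t : ℝ, 0 < t → t < ‖y‖ / (9 * d) →
      ((d : ℝ) * t + 2 * ⟪x, y⟫) * Real.sqrt (1 + t ^ 2) < ‖x‖ ^ 2 + ‖y‖ ^ 2 := by
  intro t ht ht'
  have hd' : (1 : ℝ) ≤ d := by exact_mod_cast hd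
  set r := ‖y‖ with hr
  set s := Real.sqrt (1 + t ^ 2) with hs
  have hd0 : (0 : ℝ) < d := by linarith
  have ht9 : 9 * (d : ℝ) * t < r := by
    rw [lt_div_iff₀ (by positivity)] at ht'
    nlinarith [ht']
  have hrpos : (0 : ℝ) < r := by nlinarith
  have hsd : Real.sqrt d ≤ d := by
    rw [Real.sqrt_le_left hd0.le]; nlinarith
  have hxd : ‖x‖ ≤ (d : ℝ) := hx.trans hsd
  have hI : ⟪x, y⟫ ≤ (d : ℝ) * r := by
    have := real_inner_le_norm x y
    nlinarith [norm_nonneg x, this]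
  have hs0 : 0 ≤ s := Real.sqrt_nonneg _
  have hs1 : s ≤ 1 + t := by
    rw [hs, show (1 : ℝ) + t ^ 2 = (1 + t)^2 - 2*t by ring]
    calc Real.sqrt ((1+t)^2 - 2*t) ≤ Real.sqrt ((1+t)^2) := by
          apply Real.sqrt_le_sqrt; nlinarith
      _ = 1 + t := by rw [Real.sqrt_sq (by linarith)]
  have hx0 : 0 ≤ ‖x‖ := norm_nonneg x
  rcases le_or_gt ((d : ℝ) * t + 2 * ⟪x, y⟫) 0 with h | h
  · have : ((d : ℝ) * t + 2 * ⟪x, y⟫) * s ≤ 0 := mul_nonpos_of_nonpos_of_nonneg h hs0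
    nlinarith
  · have key : ((d : ℝ) * t + 2 * ⟪x, y⟫) * s ≤ ((d : ℝ) * t + 2 * ((d:ℝ)*r)) * (1 + t) := by
      have h1 : ((d : ℝ) * t + 2 * ⟪x, y⟫) * s ≤ ((d : ℝ) * t + 2 * ⟪x, y⟫) * (1 + t) :=
        mul_le_mul_of_nonneg_left hs1 h.le
      nlinarith
    have hdt : (d : ℝ) * t ≤ r / 9 := by linarith
    have hfin : ((d : ℝ) * t + 2 * ((d:ℝ)*r)) * (1 + t) < r ^ 2 := by
      have hd4a : (1:ℝ) ≤ (d:ℝ)^4 := hd'.trans (by nlinarith [sq_nonneg ((d:ℝ)^2 - 1), sq_nonneg ((d:ℝ) - 1), sq_nonneg ((d:ℝ)^2 - (d:ℝ))])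
      have hd4b : (d:ℝ) ≤ (d:ℝ)^4 := by nlinarith [sq_nonneg ((d:ℝ)^2 - 1), sq_nonneg ((d:ℝ) - 1), sq_nonneg ((d:ℝ)^2 - (d:ℝ))]
      have hr16 : (65536:ℝ) ≤ r := by nlinarith
      have p2 : 65536 * (d:ℝ) ≤ r := by nlinarith
      have h1 : 81*(d:ℝ)^2*t^2 < r^2 := by nlinarith [mul_self_lt_mul_self (by positivity : (0:ℝ) ≤ 9*(d:ℝ)*t) ht9]
      have h2 : (d:ℝ)*t^2 ≤ (d:ℝ)^2*t^2 := by nlinarith [sq_nonneg t]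
      have h3 : 2*(d:ℝ)*r*t < 2*r^2/9 := by nlinarith [mul_lt_mul_of_pos_left ht9 hrpos]
      have p1 : 65536*r ≤ r^2 := by nlinarith [mul_le_mul_of_nonneg_right hr16 hrpos.le]
      have p3 : 2*(d:ℝ)*r*65536 ≤ 2*r^2 := by nlinarith [mul_le_mul_of_nonneg_left p2 (by linarith : (0:ℝ) ≤ 2*r)]
      have expand : ((d:ℝ)*t + 2*((d:ℝ)*r))*(1+t) = (d:ℝ)*t + (d:ℝ)*t^2 + 2*(d:ℝ)*r + 2*(d:ℝ)*r*t := by ring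
      rw [expand]
      linarith
    calc ((d:ℝ) * t + 2 * ⟪x, y⟫) * s ≤ ((d : ℝ) * t + 2 * ((d:ℝ)*r)) * (1 + t) := key
      _ < r^2 := hfin
      _ ≤ ‖x‖ ^ 2 + r ^ 2 := by nlinarith [sq_nonneg ‖x‖]
end

section
/- Let x, y ∈ ℝ^d lie in a common cube Q of side length l(Q), and set t = l(Q)². Then exp(−|x−y|²/(2t)) ≥ e^{−d/2}. If moreover |x|, |y| ≤ 8√d / l(Q), then exp(−α(t)(|x|²+|y|²)) ≥ e^{−32d}, where α(t) = (√(1+t²)−1)/(2t). Consequently k_t(x,y) ≥ c_d · (2πt)^{−d/2} with c_d = e^{−d/2}e^{−32d}. -/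
/-- For x, y in a common cube Q of side L and t = L², the Gaussian factors
of the harmonic-oscillator heat kernel are bounded below by dimensional constants. -/
theorem stmt14 (d : ℕ) (a : Fin d → ℝ) (L : ℝ) (hL : 0 < L)
    (x y : EuclideanSpace ℝ (Fin d))
    (hx : ∀ i, a i ≤ x i ∧ x i ≤ a i + L) (hy : ∀ i, a i ≤ y i ∧ y i ≤ a i + L) :
    Real.exp (-(d : ℝ) / 2) ≤ Real.exp (-‖x - y‖ ^ 2 / (2 * L ^ 2)) ∧
    (‖x‖ ≤ 8 * Real.sqrt d / L → ‖y‖ ≤ 8 * Real.sqrt d / L →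
      Real.exp (-(32 : ℝ) * d) ≤
          Real.exp (-((Real.sqrt (1 + (L ^ 2) ^ 2) - 1) / (2 * L ^ 2)) *
            (‖x‖ ^ 2 + ‖y‖ ^ 2)) ∧
      Real.exp (-(d : ℝ) / 2) * Real.exp (-(32 : ℝ) * d) *
          (2 * Real.pi * L ^ 2) ^ (-(d : ℝ) / 2) ≤
        (2 * Real.pi * L ^ 2) ^ (-(d : ℝ) / 2) * Real.exp (-‖x - y‖ ^ 2 / (2 * L ^ 2)) *
          Real.exp (-((Real.sqrt (1 + (L ^ 2) ^ 2) - 1) / (2 * L ^ 2)) *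
            (‖x‖ ^ 2 + ‖y‖ ^ 2))) := by
  have hL2 : (0:ℝ) < L ^ 2 := by positivity
  -- ‖x - y‖² ≤ d * L²
  have hnorm : ‖x - y‖ ^ 2 ≤ d * L ^ 2 := by
    have h1 : ‖x - y‖ ^ 2 = ∑ i, ((x i - y i)) ^ 2 := by
      rw [EuclideanSpace.norm_eq, Real.sq_sqrt (by positivity)]
      simp [sq_abs]
    rw [h1]
    calc ∑ i, (x i - y i) ^ 2 ≤ ∑ _i : Fin d, L ^ 2 := by
          apply Finset.sum_le_sum
          intro i _
          have h2 := hx i; have h3 := hy i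
          have : |x i - y i| ≤ L := by
            rw [abs_le]; constructor <;> nlinarith [h2.1, h2.2, h3.1, h3.2]
          calc (x i - y i) ^ 2 = |x i - y i| ^ 2 := by rw [sq_abs]
            _ ≤ L ^ 2 := by nlinarith [abs_nonneg (x i - y i)]
      _ = d * L ^ 2 := by simp [mul_comm]
  have h1 : Real.exp (-(d : ℝ) / 2) ≤ Real.exp (-‖x - y‖ ^ 2 / (2 * L ^ 2)) := by
    apply Real.exp_le_exp.2
    rw [div_le_div_iff₀ (by norm_num) (by positivity)]
    nlinarith
  refine ⟨h1, fun hxb hyb => ?_⟩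
  -- α bound: √(1+(L²)²) - 1 ≤ (L²)²/2
  have halpha : Real.sqrt (1 + (L ^ 2) ^ 2) - 1 ≤ (L ^ 2) ^ 2 / 2 := by
    have h := Real.sqrt_le_sqrt (show 1 + (L^2)^2 ≤ (1 + (L^2)^2/2)^2 by nlinarith)
    have h2 : Real.sqrt ((1 + (L^2)^2/2)^2) = 1 + (L^2)^2/2 := by
      rw [Real.sqrt_sq (by positivity)]
    linarith [h.trans_eq h2]
  have halpha0 : 0 ≤ Real.sqrt (1 + (L ^ 2) ^ 2) - 1 := by
    have : (1:ℝ) = Real.sqrt 1 := by simp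
    rw [this]
    have := Real.sqrt_le_sqrt (show (1:ℝ) ≤ 1 + (L^2)^2 by nlinarith)
    simpa using this
  -- norm bounds
  have hxs : ‖x‖ ^ 2 ≤ 64 * d / L ^ 2 := by
    have hd0 : (0:ℝ) ≤ (d:ℝ) := Nat.cast_nonneg d
    have h := mul_self_le_mul_self (norm_nonneg x) hxb
    have hsq : (8 * Real.sqrt d / L) * (8 * Real.sqrt d / L) = 64 * d / L ^ 2 := by
      rw [div_mul_div_comm]
      congr 1
      · rw [show (8 * Real.sqrt d) * (8 * Real.sqrt d) = 64 * (Real.sqrt d * Real.sqrt d) by ring,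
          Real.mul_self_sqrt hd0]
      · ring
    calc ‖x‖ ^ 2 = ‖x‖ * ‖x‖ := sq ‖x‖ ▸ (sq ‖x‖)
      _ ≤ _ := h.trans_eq hsq
  have hys : ‖y‖ ^ 2 ≤ 64 * d / L ^ 2 := by
    have hd0 : (0:ℝ) ≤ (d:ℝ) := Nat.cast_nonneg d
    have h := mul_self_le_mul_self (norm_nonneg y) hyb
    have hsq : (8 * Real.sqrt d / L) * (8 * Real.sqrt d / L) = 64 * d / L ^ 2 := by
      rw [div_mul_div_comm]
      congr 1
      · rw [show (8 * Real.sqrt d) * (8 * Real.sqrt d) = 64 * (Real.sqrt d * Real.sqrt d) by ring,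
          Real.mul_self_sqrt hd0]
      · ring
    calc ‖y‖ ^ 2 = ‖y‖ * ‖y‖ := sq ‖y‖ ▸ (sq ‖y‖)
      _ ≤ _ := h.trans_eq hsq
  have h2 : Real.exp (-(32 : ℝ) * d) ≤
      Real.exp (-((Real.sqrt (1 + (L ^ 2) ^ 2) - 1) / (2 * L ^ 2)) * (‖x‖ ^ 2 + ‖y‖ ^ 2)) := by
    apply Real.exp_le_exp.2
    have hα : (Real.sqrt (1 + (L ^ 2) ^ 2) - 1) / (2 * L ^ 2) ≤ L ^ 2 / 4 := by
      rw [div_le_iff₀ (by positivity)]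
      nlinarith
    have hα0 : 0 ≤ (Real.sqrt (1 + (L ^ 2) ^ 2) - 1) / (2 * L ^ 2) := by positivity
    have hsum : ‖x‖ ^ 2 + ‖y‖ ^ 2 ≤ 128 * d / L ^ 2 := by
      have : 64 * (d:ℝ) / L ^ 2 + 64 * d / L ^ 2 = 128 * d / L ^ 2 := by ring
      linarith
    have hsum0 : 0 ≤ ‖x‖ ^ 2 + ‖y‖ ^ 2 := by positivity
    have key : (Real.sqrt (1 + (L ^ 2) ^ 2) - 1) / (2 * L ^ 2) * (‖x‖ ^ 2 + ‖y‖ ^ 2)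
        ≤ L ^ 2 / 4 * (128 * d / L ^ 2) := by
      apply mul_le_mul hα hsum hsum0 (by positivity)
    have : L ^ 2 / 4 * (128 * (d:ℝ) / L ^ 2) = 32 * d := by
      field_simp; ring
    nlinarith
  refine ⟨h2, ?_⟩
  have hpow : (0:ℝ) < (2 * Real.pi * L ^ 2) ^ (-(d : ℝ) / 2) := by
    apply Real.rpow_pos_of_pos
    positivity
  calc Real.exp (-(d : ℝ) / 2) * Real.exp (-(32 : ℝ) * d) * (2 * Real.pi * L ^ 2) ^ (-(d : ℝ) / 2)
      = (2 * Real.pi * L ^ 2) ^ (-(d : ℝ) / 2) * Real.exp (-(d : ℝ) / 2) *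
        Real.exp (-(32 : ℝ) * d) := by ring
    _ ≤ _ := by
        apply mul_le_mul _ h2 (Real.exp_pos _).le (by positivity)
        exact mul_le_mul_of_nonneg_left h1 hpow.le
end
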